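/- There exist universal constants C₁, C₂ ≥ 1 such that for every n ≥ 1 and every monotone norm N on ℝⁿ, there exists a monotone norm M on ℝⁿ that is (C₁·n)-supermodular and satisfies N(x) ≤ M(x) ≤ C₂·N(x) for all x ∈ ℝⁿ with nonnegative coordinates. -/

import Mathlib

/-!
By Hahn–Banach and monotonicity, every nonnegative `x` is normed exactly by a nonnegative
functional `y` with `y ⬝ᵥ · ≤ N` on the orthant. A maximal `1/2`-separated subset of
`{x ≥ 0 | N x = 1}`, measured in the lattice norm `N |·|`, has at most `5ⁿ` points by comparing
volumes of balls, and the doubled norming functionals of its points form a family `Y` with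
`N x ≤ max_{y ∈ Y} y ⬝ᵥ x ≤ 2 N x`. Then `M x = (∑_{y ∈ Y} (y ⬝ᵥ |x|)ⁿ)^(1/n)` is a monotone
norm with `N ≤ M ≤ |Y|^(1/n) · 2N ≤ 10 N`, and `Mⁿ` is a sum of `n`-th powers of nonnegative
linear forms, hence `n`-supermodular by convexity of `t ↦ tⁿ`.
-/

noncomputable section

/-- A monotone norm on ℝⁿ: subadditive, absolutely homogeneous, point-separating, and
monotone on the nonnegative orthant. -/
def IsMonotoneNorm {n : ℕ} (N : (Fin n → ℝ) → ℝ) : Prop :=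
  (∀ x y, N (x + y) ≤ N x + N y) ∧
  (∀ (c : ℝ) (x), N (c • x) = |c| * N x) ∧
  (∀ x, N x = 0 → x = 0) ∧
  (∀ x y : Fin n → ℝ, 0 ≤ x → x ≤ y → N x ≤ N y)

/-- `N` is `p`-supermodular: `N(u+v+w)^p − N(u+v)^p ≥ N(u+w)^p − N(u)^p` for all
nonnegative `u, v, w`. -/
def IsPSupermodular {n : ℕ} (N : (Fin n → ℝ) → ℝ) (p : ℝ) : Prop :=
  ∀ u v w : Fin n → ℝ, 0 ≤ u → 0 ≤ v → 0 ≤ w →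
    N (u + w) ^ p - N u ^ p ≤ N (u + v + w) ^ p - N (u + v) ^ p

open MeasureTheory Pointwise Module Matrix

theorem ConvexOn.map_add_sub_le_map_add_sub {s : Set ℝ} {f : ℝ → ℝ} (hf : ConvexOn ℝ s f)
    {a b c : ℝ} (ha : a ∈ s) (hbc : b + c ∈ s) (hab : a ≤ b) (hc : 0 ≤ c) :
    f (a + c) - f a ≤ f (b + c) - f b := by
  rcases (show 0 ≤ b - a + c by linarith).eq_or_lt with hd | hd
  · obtain rfl : c = 0 := by linarith
    obtain rfl : a = b := by linarith
    rfl
  -- `a + c` and `b` are convex combinations of `a` and `b + c` with swapped weights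
  have hw₁ : 0 ≤ (b - a) / (b - a + c) := div_nonneg (by linarith) hd.le
  have hw₂ : 0 ≤ c / (b - a + c) := div_nonneg hc hd.le
  have hsum : (b - a) / (b - a + c) + c / (b - a + c) = 1 := by field_simp
  have h₁ := hf.2 ha hbc hw₁ hw₂ hsum
  have h₂ := hf.2 ha hbc hw₂ hw₁ (by rw [add_comm, hsum])
  simp only [smul_eq_mul] at h₁ h₂
  rw [show (b - a) / (b - a + c) * a + c / (b - a + c) * (b + c) = a + c by field_simp; ring]
    at h₁
  rw [show c / (b - a + c) * a + (b - a) / (b - a + c) * (b + c) = b by field_simp; ring] at h₂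
  have key : f (a + c) + f b ≤ f a + f (b + c) :=
    calc f (a + c) + f b
        ≤ ((b - a) / (b - a + c) + c / (b - a + c)) * (f a + f (b + c)) := by linarith
      _ = f a + f (b + c) := by rw [hsum, one_mul]
  linarith

theorem Seminorm.exists_dual_le_apply_eq {E : Type*} [AddCommGroup E] [Module ℝ E]
    (p : Seminorm ℝ E) (x : E) : ∃ g : Module.Dual ℝ E, g x = p x ∧ ∀ w, g w ≤ p w := by
  let f : E →ₗ.[ℝ] ℝ := LinearPMap.mkSpanSingleton' x (p x) fun c hc => by
    rcases eq_or_ne c 0 with rfl | hc₀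
    · simp
    · simp [(smul_eq_zero.1 hc).resolve_left hc₀]
  have hf : ∀ c : ℝ, ∀ h, f ⟨c • x, h⟩ = c * p x := fun c h =>
    LinearPMap.mkSpanSingleton'_apply x (p x) _ c h
  have hfp : ∀ w : f.domain, f w ≤ p w := by
    rintro ⟨w, hw⟩
    obtain ⟨c, rfl⟩ := Submodule.mem_span_singleton.1 hw
    rw [hf, map_smul_eq_mul, Real.norm_eq_abs]
    exact mul_le_mul_of_nonneg_right (le_abs_self c) (apply_nonneg p x)
  obtain ⟨g, hgf, hgp⟩ := exists_extension_of_le_sublinear f p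
    (fun c hc w => by rw [map_smul_eq_mul, Real.norm_of_nonneg hc.le]) (map_add_le_add p) hfp
  refine ⟨g, ?_, hgp⟩
  have h := hgf ⟨(1 : ℝ) • x, Submodule.smul_mem _ _ (Submodule.mem_span_singleton_self x)⟩
  rw [hf, one_mul] at h
  simpa using h

theorem Seminorm.exists_finset_pairwise_forall_lt {E : Type*} [AddCommGroup E] [Module ℝ E]
    (p : Seminorm ℝ E) {S : Set E} {ε : ℝ} (hε : 0 < ε) {K : ℕ}
    (hK : ∀ X : Finset E, ↑X ⊆ S → (X : Set E).Pairwise (fun x x' => ε ≤ p (x - x')) →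
      X.card ≤ K) :
    ∃ X : Finset E, ↑X ⊆ S ∧ X.card ≤ K ∧ ∀ z ∈ S, ∃ x ∈ X, p (z - x) < ε := by
  classical
  let P : ℕ → Prop := fun k => ∃ X : Finset E, ↑X ⊆ S ∧
    (X : Set E).Pairwise (fun x x' => ε ≤ p (x - x')) ∧ X.card = k
  obtain ⟨X, hXS, hXsep, hXcard⟩ : P (Nat.findGreatest P K) :=
    Nat.findGreatest_spec (Nat.zero_le K) ⟨∅, by simp, by simp, rfl⟩
  refine ⟨X, hXS, hK X hXS hXsep, fun z hz => ?_⟩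
  by_contra! hfar
  have hzX : z ∉ X := fun hzX => by simpa using (hfar z hzX).trans_lt' hε
  have hsep : (↑(insert z X) : Set E).Pairwise (fun x x' => ε ≤ p (x - x')) := by
    rw [Finset.coe_insert, Set.pairwise_insert]
    exact ⟨hXsep, fun x hx _ => ⟨hfar x hx, by rw [map_sub_rev]; exact hfar x hx⟩⟩
  have hins : ↑(insert z X) ⊆ S := by
    rw [Finset.coe_insert]; exact Set.insert_subset hz hXS
  have := Nat.le_findGreatest (P := P) (hK _ hins hsep) ⟨_, hins, hsep, rfl⟩
  rw [← hXcard, Finset.card_insert_of_notMem hzX] at this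
  omega

theorem Seminorm.card_mul_pow_le_of_pairwise {E : Type*} [NormedAddCommGroup E]
    [NormedSpace ℝ E] [FiniteDimensional ℝ E] [MeasurableSpace E] [BorelSpace E] (μ : Measure E)
    [μ.IsAddHaarMeasure] (p : Seminorm ℝ E) (hp : Bornology.IsBounded (p.ball 0 1))
    {Y : Finset E} {R r : ℝ} (hR : 0 ≤ R) (hr : 0 < r) (hYR : ∀ y ∈ Y, p y ≤ R)
    (hY : (Y : Set E).Pairwise fun y y' => 2 * r ≤ p (y - y')) :
    (Y.card : ℝ) * r ^ finrank ℝ E ≤ (R + r) ^ finrank ℝ E := by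
  have hball : ∀ s, 0 < s →
      μ (p.ball 0 s) = ENNReal.ofReal (s ^ finrank ℝ E) * μ (p.ball 0 1) := fun s hs => by
    rw [← Measure.addHaar_smul_of_nonneg μ hs.le, Seminorm.smul_ball_zero hs.ne',
        Real.norm_of_nonneg hs.le, mul_one]
  have hopen : ∀ y s, IsOpen (p.ball y s) := fun y s =>
    isOpen_lt (p.convexOn.locallyLipschitz.continuous.comp (continuous_sub_right y))
      continuous_const
  have hpos : μ (p.ball 0 1) ≠ 0 :=
    ((hopen 0 1).measure_pos μ ⟨0, by simp⟩).ne'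
  have hfin : μ (p.ball 0 1) ≠ ⊤ := hp.measure_lt_top.ne
  have hdisj : (Y : Set E).PairwiseDisjoint fun y => p.ball y r := by
    intro y hy y' hy' hne
    refine Set.disjoint_left.2 fun w hw hw' => ?_
    rw [Seminorm.mem_ball] at hw hw'
    have := calc 2 * r ≤ p (y - y') := hY hy hy' hne
      _ ≤ p (w - y) + p (w - y') := by
          simpa [map_sub_rev p w y] using map_add_le_add p (y - w) (w - y')
      _ < r + r := add_lt_add hw hw'
    linarith
  have hsub : (⋃ y ∈ Y, p.ball y r) ⊆ p.ball 0 (R + r) := by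
    refine Set.iUnion₂_subset fun y hy w hw => ?_
    rw [Seminorm.mem_ball] at hw
    rw [Seminorm.mem_ball_zero]
    calc p w ≤ p (w - y) + p y := by simpa using map_add_le_add p (w - y) y
      _ < r + R := add_lt_add_of_lt_of_le hw (hYR y hy)
      _ = R + r := add_comm r R
  have key : (Y.card : ENNReal) * (ENNReal.ofReal (r ^ finrank ℝ E) * μ (p.ball 0 1)) ≤
      ENNReal.ofReal ((R + r) ^ finrank ℝ E) * μ (p.ball 0 1) := by
    calc (Y.card : ENNReal) * (ENNReal.ofReal (r ^ finrank ℝ E) * μ (p.ball 0 1))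
        = ∑ y ∈ Y, μ (p.ball y r) := by
          rw [← hball r hr, Finset.sum_congr rfl fun y _ => ?_, Finset.sum_const, nsmul_eq_mul]
          rw [← measure_vadd μ y (p.ball 0 r), Seminorm.vadd_ball, vadd_eq_add, add_zero]
      _ = μ (⋃ y ∈ Y, p.ball y r) :=
          (measure_biUnion_finset hdisj fun y _ => (hopen y r).measurableSet).symm
      _ ≤ μ (p.ball 0 (R + r)) := measure_mono hsub
      _ = _ := hball _ (by linarith)
  rw [← mul_assoc, ENNReal.mul_le_mul_iff_left hpos hfin, ← ENNReal.ofReal_natCast,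
    ← ENNReal.ofReal_mul (by positivity)] at key
  exact (ENNReal.ofReal_le_ofReal_iff (by positivity)).1 key

def posDualBall {n : ℕ} (N : (Fin n → ℝ) → ℝ) : Set (Fin n → ℝ) :=
  {y | 0 ≤ y ∧ ∀ x, 0 ≤ x → y ⬝ᵥ x ≤ N x}

structure IsNormingFamily {n : ℕ} (N : (Fin n → ℝ) → ℝ) (c : ℝ)
    (Y : Finset (Fin n → ℝ)) : Prop where
  nonneg : ∀ y ∈ Y, 0 ≤ y
  dotProduct_le : ∀ y ∈ Y, ∀ x, 0 ≤ x → y ⬝ᵥ x ≤ c * N x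
  exists_le_dotProduct : ∀ x, 0 ≤ x → x ≠ 0 → ∃ y ∈ Y, N x ≤ y ⬝ᵥ x

namespace IsMonotoneNorm

variable {n : ℕ} {N : (Fin n → ℝ) → ℝ}

def toSeminorm (hN : IsMonotoneNorm N) : Seminorm ℝ (Fin n → ℝ) :=
  Seminorm.of N hN.1 fun c x => by rw [hN.2.1, Real.norm_eq_abs]

/-- Unlike `N`, this bounds `-(y ⬝ᵥ x)` for `y ∈ posDualBall N`
(`neg_absSeminorm_le_dotProduct`), which is why separation is measured in it. -/
def absSeminorm (hN : IsMonotoneNorm N) : Seminorm ℝ (Fin n → ℝ) :=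
  Seminorm.of (fun x => N |x|)
    (fun x y => (hN.2.2.2 _ _ (abs_nonneg _) (abs_add_le x y)).trans (hN.1 _ _))
    fun c x => by
      rw [show |c • x| = |c| • |x| from funext fun i => abs_mul c (x i), hN.2.1, abs_abs,
        Real.norm_eq_abs]

variable (hN : IsMonotoneNorm N)
include hN

lemma nonneg (x : Fin n → ℝ) : 0 ≤ N x := apply_nonneg hN.toSeminorm x

lemma apply_zero : N 0 = 0 := map_zero hN.toSeminorm

lemma single_one_pos (i : Fin n) : 0 < N (Pi.single i 1) :=
  (hN.nonneg _).lt_of_ne fun h => by simpa using congr_fun (hN.2.2.1 _ h.symm) i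

lemma mul_single_one_le {x : Fin n → ℝ} (hx : 0 ≤ x) (i : Fin n) :
    x i * N (Pi.single i 1) ≤ N x := by
  have hsingle : Pi.single i (x i) = x i • (Pi.single i 1 : Fin n → ℝ) := by
    simp [← Pi.single_smul]
  calc x i * N (Pi.single i 1) = N (Pi.single i (x i)) := by
        rw [hsingle, hN.2.1, abs_of_nonneg (hx i)]
    _ ≤ N x := hN.2.2.2 _ _ (Pi.single_nonneg.2 (hx i)) fun j => by
        rcases eq_or_ne j i with rfl | hj
        · simp
        · simpa [hj] using hx j

lemma isBounded_absSeminorm_ball : Bornology.IsBounded (hN.absSeminorm.ball 0 1) := by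
  let c : Fin n → ℝ := fun i => 1 / N (Pi.single i 1)
  refine (isCompact_Icc (a := -c) (b := c)).isBounded.subset fun x hx => ?_
  rw [Seminorm.mem_ball_zero] at hx
  have hcoord : ∀ i, |x i| ≤ c i := fun i => by
    refine (le_div_iff₀ (hN.single_one_pos i)).2 ?_
    exact (hN.mul_single_one_le (abs_nonneg x) i).trans hx.le
  exact ⟨fun i => (abs_le.1 (hcoord i)).1, fun i => (abs_le.1 (hcoord i)).2⟩

lemma sup_zero_mem_posDualBall {z : Fin n → ℝ} (hz : ∀ x, z ⬝ᵥ x ≤ N x) :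
    z ⊔ 0 ∈ posDualBall N := by
  refine ⟨le_sup_right, fun x hx => ?_⟩
  -- testing `z ⊔ 0` against `x` is testing `z` against `x` cut down to the support of `z ⊔ 0`
  let x' : Fin n → ℝ := fun i => if 0 ≤ z i then x i else 0
  have hx' : 0 ≤ x' := fun i => by dsimp only [x']; split_ifs; exacts [hx i, le_rfl]
  have hx'x : x' ≤ x := fun i => by dsimp only [x']; split_ifs; exacts [le_rfl, hx i]
  calc (z ⊔ 0) ⬝ᵥ x = z ⬝ᵥ x' := Finset.sum_congr rfl fun i _ => by
        by_cases h : 0 ≤ z i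
        · simp [x', h]
        · simp [x', h, (not_le.1 h).le]
    _ ≤ N x' := hz x'
    _ ≤ N x := hN.2.2.2 _ _ hx' hx'x

lemma exists_mem_posDualBall_dotProduct_eq {x : Fin n → ℝ} (hx : 0 ≤ x) :
    ∃ y ∈ posDualBall N, y ⬝ᵥ x = N x := by
  obtain ⟨g, hgx, hg⟩ := hN.toSeminorm.exists_dual_le_apply_eq x
  set z := (dotProductEquiv ℝ (Fin n)).symm g
  have hz : ∀ w, z ⬝ᵥ w = g w := fun w =>
    LinearMap.congr_fun ((dotProductEquiv ℝ (Fin n)).apply_symm_apply g) w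
  have hy := hN.sup_zero_mem_posDualBall fun w => (hz w).trans_le (hg w)
  refine ⟨z ⊔ 0, hy, le_antisymm (hy.2 x hx) ?_⟩
  calc N x = z ⬝ᵥ x := by rw [hz, hgx]; rfl
    _ ≤ (z ⊔ 0) ⬝ᵥ x := dotProduct_le_dotProduct_of_nonneg_right le_sup_left hx

lemma neg_absSeminorm_le_dotProduct {y : Fin n → ℝ} (hy : y ∈ posDualBall N)
    (v : Fin n → ℝ) : -hN.absSeminorm v ≤ y ⬝ᵥ v :=
  calc -hN.absSeminorm v ≤ -(y ⬝ᵥ |v|) := neg_le_neg (hy.2 _ (abs_nonneg v))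
    _ = y ⬝ᵥ -|v| := (dotProduct_neg _ _).symm
    _ ≤ y ⬝ᵥ v := dotProduct_le_dotProduct_of_nonneg_left (fun i => neg_abs_le (v i)) hy.1

lemma card_le_of_pairwise_absSeminorm {X : Finset (Fin n → ℝ)}
    (hX₁ : ∀ x ∈ X, hN.absSeminorm x ≤ 1)
    (hX : (X : Set _).Pairwise fun x x' => 1 / 2 ≤ hN.absSeminorm (x - x')) :
    X.card ≤ 5 ^ n := by
  have h := hN.absSeminorm.card_mul_pow_le_of_pairwise volume hN.isBounded_absSeminorm_ball
    zero_le_one (by norm_num : (0 : ℝ) < 1 / 4) hX₁ (by norm_num; exact hX)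
  rw [finrank_fin_fun, show (1 + 1 / 4 : ℝ) = 5 * (1 / 4) by norm_num, mul_pow] at h
  exact_mod_cast le_of_mul_le_mul_right h (by positivity)

lemma exists_isNormingFamily :
    ∃ Y : Finset (Fin n → ℝ), Y.card ≤ 5 ^ n ∧ IsNormingFamily N 2 Y := by
  classical
  let S : Set (Fin n → ℝ) := {x | 0 ≤ x ∧ N x = 1}
  have hpack : ∀ X : Finset (Fin n → ℝ), ↑X ⊆ S →
      (X : Set _).Pairwise (fun x x' => 1 / 2 ≤ hN.absSeminorm (x - x')) → X.card ≤ 5 ^ n :=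
    fun X hXS => hN.card_le_of_pairwise_absSeminorm fun x hx =>
      (congrArg N (abs_of_nonneg (hXS hx).1)).trans (hXS hx).2 |>.le
  obtain ⟨X, hXS, hXcard, hXcover⟩ :=
    hN.absSeminorm.exists_finset_pairwise_forall_lt (by norm_num : (0 : ℝ) < 1 / 2) hpack
  choose! f hfD hfx using fun x (hx : 0 ≤ x) => hN.exists_mem_posDualBall_dotProduct_eq hx
  refine ⟨X.image fun x => (2 : ℝ) • f x, Finset.card_image_le.trans hXcard, ⟨?_, ?_, ?_⟩⟩
  · simp only [Finset.mem_image, forall_exists_index, and_imp, forall_apply_eq_imp_iff₂]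
    exact fun x hx => smul_nonneg zero_le_two (hfD x (hXS hx).1).1
  · simp only [Finset.mem_image, forall_exists_index, and_imp, forall_apply_eq_imp_iff₂]
    intro x hx w hw
    rw [smul_dotProduct, smul_eq_mul]
    exact mul_le_mul_of_nonneg_left ((hfD x (hXS hx).1).2 w hw) zero_le_two
  intro x hx hx0
  have hNx : 0 < N x := (hN.nonneg x).lt_of_ne fun h => hx0 (hN.2.2.1 x h.symm)
  have hx'S : (N x)⁻¹ • x ∈ S := ⟨smul_nonneg (inv_nonneg.2 hNx.le) hx,
    by rw [hN.2.1, abs_of_pos (inv_pos.2 hNx), inv_mul_cancel₀ hNx.ne']⟩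
  obtain ⟨x₀, hx₀X, hclose⟩ := hXcover _ hx'S
  obtain ⟨hx₀, hNx₀⟩ := hXS hx₀X
  refine ⟨2 • f x₀, Finset.mem_image_of_mem _ hx₀X, ?_⟩
  -- `f x₀` norms `x₀` exactly and `x₀` is `1/2`-close to `x / N x`
  have h := hN.neg_absSeminorm_le_dotProduct (hfD x₀ hx₀) ((N x)⁻¹ • x - x₀)
  rw [dotProduct_sub, hfx x₀ hx₀, hNx₀, dotProduct_smul, smul_eq_mul, inv_mul_eq_div] at h
  rw [smul_dotProduct, smul_eq_mul]
  have := (le_div_iff₀ hNx).1 (show 1 / 2 ≤ f x₀ ⬝ᵥ x / N x by linarith)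
  linarith

end IsMonotoneNorm

section LpNormOfForms

variable {n : ℕ} {Y : Finset (Fin n → ℝ)} {p : ℝ}

def powSumOfForms (Y : Finset (Fin n → ℝ)) (p : ℝ) (x : Fin n → ℝ) : ℝ :=
  ∑ y ∈ Y, (y ⬝ᵥ |x|) ^ p

def lpNormOfForms (Y : Finset (Fin n → ℝ)) (p : ℝ) (x : Fin n → ℝ) : ℝ :=
  powSumOfForms Y p x ^ p⁻¹

lemma lpNormOfForms_abs (x : Fin n → ℝ) : lpNormOfForms Y p |x| = lpNormOfForms Y p x := by
  simp [lpNormOfForms, powSumOfForms]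

variable (hY : ∀ y ∈ Y, 0 ≤ y)
include hY

lemma dotProduct_abs_nonneg {y : Fin n → ℝ} (hy : y ∈ Y) (x : Fin n → ℝ) : 0 ≤ y ⬝ᵥ |x| :=
  dotProduct_nonneg_of_nonneg (hY y hy) (abs_nonneg x)

lemma powSumOfForms_nonneg (x : Fin n → ℝ) : 0 ≤ powSumOfForms Y p x :=
  Finset.sum_nonneg fun _ hy => Real.rpow_nonneg (dotProduct_abs_nonneg hY hy x) p

lemma lpNormOfForms_nonneg (x : Fin n → ℝ) : 0 ≤ lpNormOfForms Y p x :=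
  Real.rpow_nonneg (powSumOfForms_nonneg hY x) _

lemma lpNormOfForms_rpow (hp : p ≠ 0) (x : Fin n → ℝ) :
    lpNormOfForms Y p x ^ p = powSumOfForms Y p x :=
  Real.rpow_inv_rpow (powSumOfForms_nonneg hY x) hp

lemma lpNormOfForms_add_le (hp : 1 ≤ p) (x x' : Fin n → ℝ) :
    lpNormOfForms Y p (x + x') ≤ lpNormOfForms Y p x + lpNormOfForms Y p x' := by
  have hp₀ : 0 < p := by linarith
  calc lpNormOfForms Y p (x + x') ≤ (∑ y ∈ Y, (y ⬝ᵥ |x| + y ⬝ᵥ |x'|) ^ p) ^ (1 / p) := by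
        rw [one_div]
        refine Real.rpow_le_rpow (powSumOfForms_nonneg hY _) (Finset.sum_le_sum fun y hy => ?_)
          (inv_nonneg.2 hp₀.le)
        refine Real.rpow_le_rpow (dotProduct_abs_nonneg hY hy _) ?_ hp₀.le
        rw [← dotProduct_add]
        exact dotProduct_le_dotProduct_of_nonneg_left (abs_add_le x x') (hY y hy)
    _ ≤ lpNormOfForms Y p x + lpNormOfForms Y p x' := by
        simpa only [one_div, lpNormOfForms, powSumOfForms] using
          Real.Lp_add_le_of_nonneg (s := Y) hp (fun y hy => dotProduct_abs_nonneg hY hy x)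
            (fun y hy => dotProduct_abs_nonneg hY hy x')

lemma lpNormOfForms_smul (hp : p ≠ 0) (c : ℝ) (x : Fin n → ℝ) :
    lpNormOfForms Y p (c • x) = |c| * lpNormOfForms Y p x := by
  have hS : powSumOfForms Y p (c • x) = |c| ^ p * powSumOfForms Y p x := by
    rw [powSumOfForms, powSumOfForms, Finset.mul_sum]
    refine Finset.sum_congr rfl fun y hy => ?_
    rw [show |c • x| = |c| • |x| from funext fun i => abs_mul c (x i), dotProduct_smul,
      smul_eq_mul, Real.mul_rpow (abs_nonneg c) (dotProduct_abs_nonneg hY hy x)]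
  rw [lpNormOfForms, hS, Real.mul_rpow (by positivity) (powSumOfForms_nonneg hY x),
    Real.rpow_rpow_inv (abs_nonneg c) hp, lpNormOfForms]

lemma lpNormOfForms_mono (hp : 0 ≤ p) {x x' : Fin n → ℝ} (h : |x| ≤ |x'|) :
    lpNormOfForms Y p x ≤ lpNormOfForms Y p x' :=
  Real.rpow_le_rpow (powSumOfForms_nonneg hY x) (Finset.sum_le_sum fun y hy =>
    Real.rpow_le_rpow (dotProduct_abs_nonneg hY hy x)
      (dotProduct_le_dotProduct_of_nonneg_left h (hY y hy)) hp) (inv_nonneg.2 hp)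

lemma powSumOfForms_sub_le (hp : 1 ≤ p) {u v w : Fin n → ℝ} (hu : 0 ≤ u) (hv : 0 ≤ v)
    (hw : 0 ≤ w) :
    powSumOfForms Y p (u + w) - powSumOfForms Y p u ≤
      powSumOfForms Y p (u + v + w) - powSumOfForms Y p (u + v) := by
  simp only [powSumOfForms, abs_of_nonneg hu, abs_of_nonneg (add_nonneg hu hv),
    abs_of_nonneg (add_nonneg hu hw), abs_of_nonneg (add_nonneg (add_nonneg hu hv) hw),
    ← Finset.sum_sub_distrib, dotProduct_add]
  refine Finset.sum_le_sum fun y hy => ?_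
  have hyu := dotProduct_nonneg_of_nonneg (hY y hy) hu
  have hyv := dotProduct_nonneg_of_nonneg (hY y hy) hv
  have hyw := dotProduct_nonneg_of_nonneg (hY y hy) hw
  exact (convexOn_rpow hp).map_add_sub_le_map_add_sub hyu
    (Set.mem_Ici.2 (add_nonneg (add_nonneg hyu hyv) hyw)) (le_add_of_nonneg_right hyv) hyw

lemma isPSupermodular_lpNormOfForms (hp : 1 ≤ p) : IsPSupermodular (lpNormOfForms Y p) p :=
  fun u v w hu hv hw => by
    simp only [lpNormOfForms_rpow hY (by linarith : p ≠ 0)]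
    exact powSumOfForms_sub_le hY hp hu hv hw

lemma dotProduct_abs_le_lpNormOfForms (hp : 0 < p) {y : Fin n → ℝ} (hy : y ∈ Y)
    (x : Fin n → ℝ) : y ⬝ᵥ |x| ≤ lpNormOfForms Y p x :=
  (Real.le_rpow_inv_iff_of_pos (dotProduct_abs_nonneg hY hy x) (powSumOfForms_nonneg hY x) hp).2
    (Finset.single_le_sum (f := fun y => (y ⬝ᵥ |x|) ^ p)
      (fun _ hy => Real.rpow_nonneg (dotProduct_abs_nonneg hY hy x) p) hy)

lemma lpNormOfForms_le (hp : 0 < p) {x : Fin n → ℝ} {t : ℝ} (ht₀ : 0 ≤ t)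
    (ht : ∀ y ∈ Y, y ⬝ᵥ |x| ≤ t) : lpNormOfForms Y p x ≤ (Y.card : ℝ) ^ p⁻¹ * t :=
  calc lpNormOfForms Y p x ≤ ((Y.card : ℝ) * t ^ p) ^ p⁻¹ := by
        refine Real.rpow_le_rpow (powSumOfForms_nonneg hY x) ?_ (inv_nonneg.2 hp.le)
        rw [← nsmul_eq_mul, ← Finset.sum_const]
        exact Finset.sum_le_sum fun y hy =>
          Real.rpow_le_rpow (dotProduct_abs_nonneg hY hy x) (ht y hy) hp.le
    _ = (Y.card : ℝ) ^ p⁻¹ * t := by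
        rw [Real.mul_rpow (Nat.cast_nonneg _) (Real.rpow_nonneg ht₀ _),
          Real.rpow_rpow_inv ht₀ hp.ne']

end LpNormOfForms

namespace IsNormingFamily

variable {n : ℕ} {N : (Fin n → ℝ) → ℝ} {c : ℝ} {Y : Finset (Fin n → ℝ)} {p : ℝ}
  (hY : IsNormingFamily N c Y) (hN : IsMonotoneNorm N)
include hY hN

lemma le_lpNormOfForms (hp : 0 < p) {x : Fin n → ℝ} (hx : 0 ≤ x) :
    N x ≤ lpNormOfForms Y p x := by
  rcases eq_or_ne x 0 with rfl | hx₀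
  · rw [hN.apply_zero]
    exact lpNormOfForms_nonneg hY.nonneg 0
  obtain ⟨y, hy, hNy⟩ := hY.exists_le_dotProduct x hx hx₀
  calc N x ≤ y ⬝ᵥ |x| := by rwa [abs_of_nonneg hx]
    _ ≤ lpNormOfForms Y p x := dotProduct_abs_le_lpNormOfForms hY.nonneg hp hy x

lemma lpNormOfForms_le (hc : 0 ≤ c) (hp : 0 < p) {x : Fin n → ℝ} (hx : 0 ≤ x) :
    lpNormOfForms Y p x ≤ (Y.card : ℝ) ^ p⁻¹ * (c * N x) :=
  _root_.lpNormOfForms_le hY.nonneg hp (mul_nonneg hc (hN.nonneg x)) fun y hy => by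
    rw [abs_of_nonneg hx]
    exact hY.dotProduct_le y hy x hx

lemma isMonotoneNorm_lpNormOfForms (hp : 1 ≤ p) : IsMonotoneNorm (lpNormOfForms Y p) := by
  refine ⟨lpNormOfForms_add_le hY.nonneg hp, lpNormOfForms_smul hY.nonneg (by linarith),
    fun x hx => ?_, fun x x' hx hxx' => lpNormOfForms_mono hY.nonneg (by linarith) ?_⟩
  · have h : N |x| ≤ lpNormOfForms Y p |x| :=
      hY.le_lpNormOfForms hN (by linarith) (abs_nonneg x)
    rw [lpNormOfForms_abs, hx] at h
    exact (Pi.abs_eq_zero x).1 (hN.2.2.1 _ (le_antisymm h (hN.nonneg _)))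
  · rwa [abs_of_nonneg hx, abs_of_nonneg (hx.trans hxx')]

end IsNormingFamily

/-- Every monotone norm on ℝⁿ can be `O(1)`-approximated by an `O(n)`-supermodular
monotone norm. -/
theorem monotoneNorm_nSupermodular_approx :
    ∃ C₁ C₂ : ℝ, 1 ≤ C₁ ∧ 1 ≤ C₂ ∧ ∀ n : ℕ, 1 ≤ n →
      ∀ N : (Fin n → ℝ) → ℝ, IsMonotoneNorm N →
        ∃ M : (Fin n → ℝ) → ℝ, IsMonotoneNorm M ∧
          IsPSupermodular M (C₁ * n) ∧
          ∀ x : Fin n → ℝ, 0 ≤ x → N x ≤ M x ∧ M x ≤ C₂ * N x := by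
  refine ⟨1, 10, le_rfl, by norm_num, fun n hn N hN => ?_⟩
  obtain ⟨Y, hYcard, hY⟩ := hN.exists_isNormingFamily
  have hp : (1 : ℝ) ≤ n := by exact_mod_cast hn
  have hcard : (Y.card : ℝ) ^ (n : ℝ)⁻¹ ≤ 5 := by
    rw [Real.rpow_inv_le_iff_of_pos (by positivity) (by norm_num) (by linarith),
      Real.rpow_natCast]
    exact_mod_cast hYcard
  refine ⟨lpNormOfForms Y n, hY.isMonotoneNorm_lpNormOfForms hN hp,
    by rw [one_mul]; exact isPSupermodular_lpNormOfForms hY.nonneg hp,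
    fun x hx => ⟨hY.le_lpNormOfForms hN (by linarith) hx, ?_⟩⟩
  calc lpNormOfForms Y n x ≤ (Y.card : ℝ) ^ (n : ℝ)⁻¹ * (2 * N x) :=
        hY.lpNormOfForms_le hN zero_le_two (by linarith) hx
    _ ≤ 5 * (2 * N x) := by gcongr; exact mul_nonneg zero_le_two (hN.nonneg x)
    _ = 10 * N x := by ring
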